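/- For a clustering system 𝒞 on a finite set X the following statements are equivalent: (1) there is a level-1 network N on X with 𝒞 ⊆ 𝒞_N (𝒞 is compatible with a level-1 network); (2) there is a level-1 network N on X with 𝒞_N = 𝓘(𝒞); (3) 𝒞 satisfies property (L). -/

import Mathlib

namespace PhyloNet

/-- A (rooted) network on a set `X` of taxa: a finite directed acyclic graph with a
unique vertex of indegree 0 (the root), whose vertices of outdegree 0 (the leaves)
are exactly the elements of `X` (via the injection `leafEmb`). -/
structure Network (X : Type) where
  V : Type
  [fintypeV : Fintype V]
  E : V → V → Prop
  leafEmb : X → V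
  leafEmb_inj : Function.Injective leafEmb
  acyclic : ∀ u v : V, E u v → ¬ Relation.ReflTransGen E v u
  root_unique : ∃! r : V, ∀ u : V, ¬ E u r
  leaf_iff : ∀ v : V, (∀ w : V, ¬ E v w) ↔ ∃ x : X, leafEmb x = v

attribute [instance] Network.fintypeV

variable {X : Type}

namespace Network

/-- `reach u v` : there is a directed path (possibly trivial) from `u` to `v`,
i.e. `v ⪯ u`. -/
def reach (N : Network X) : N.V → N.V → Prop := Relation.ReflTransGen N.E

/-- The cluster of a vertex: the set of leaves reachable from it. -/
def cluster (N : Network X) (v : N.V) : Set X := {x | N.reach v (N.leafEmb x)}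

/-- The clustering system of a network. -/
def CS (N : Network X) : Set (Set X) := Set.range N.cluster

noncomputable def inDeg (N : Network X) (v : N.V) : ℕ := {u | N.E u v}.ncard
noncomputable def outDeg (N : Network X) (v : N.V) : ℕ := {w | N.E v w}.ncard

def IsHybrid (N : Network X) (v : N.V) : Prop := 1 < N.inDeg v
def IsTreeVertex (N : Network X) (v : N.V) : Prop := N.inDeg v ≤ 1
def IsLeaf (N : Network X) (v : N.V) : Prop := ∀ w : N.V, ¬ N.E v w

/-- The arc `(u,w)` is a shortcut: `w ≺ v` for some child `v ≠ w` of `u`. -/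
def IsShortcut (N : Network X) (u w : N.V) : Prop :=
  N.E u w ∧ ∃ v : N.V, N.E u v ∧ v ≠ w ∧ N.reach v w

def ShortcutFree (N : Network X) : Prop := ∀ u w : N.V, ¬ N.IsShortcut u w

/-- Path-cluster comparability. -/
def PCC (N : Network X) : Prop :=
  ∀ u v : N.V, (N.reach u v ∨ N.reach v u) ↔
    (N.cluster u ⊆ N.cluster v ∨ N.cluster v ⊆ N.cluster u)

def SemiRegular (N : Network X) : Prop := N.ShortcutFree ∧ N.PCC

/-- `N` is regular iff `v ↦ C(v)` is a digraph isomorphism onto the Hasse diagram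
of `𝒞_N` (ordered by inclusion). -/
def Regular (N : Network X) : Prop :=
  Function.Injective N.cluster ∧
  ∀ u v : N.V, N.E u v ↔
    (N.cluster v ⊂ N.cluster u ∧
      ¬ ∃ w : N.V, N.cluster v ⊂ N.cluster w ∧ N.cluster w ⊂ N.cluster u)

def Separated (N : Network X) : Prop := ∀ v : N.V, N.IsHybrid v → N.outDeg v = 1

def Phylogenetic (N : Network X) : Prop := ¬ ∃ v : N.V, N.outDeg v = 1 ∧ N.inDeg v ≤ 1

def Binary (N : Network X) : Prop :=
  (∀ v : N.V, N.IsTreeVertex v → (N.IsLeaf v ∨ N.outDeg v = 2)) ∧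
  (∀ v : N.V, N.IsHybrid v → N.inDeg v = 2 ∧ N.outDeg v = 1)

def TreeChild (N : Network X) : Prop :=
  ∀ v : N.V, ¬ N.IsLeaf v → ∃ u : N.V, N.E v u ∧ N.inDeg u = 1

/-- The underlying undirected (simple) graph of a network. -/
def UG (N : Network X) : SimpleGraph N.V where
  Adj u v := u ≠ v ∧ (N.E u v ∨ N.E v u)
  symm := ⟨fun _ _ h => ⟨Ne.symm h.1, Or.symm h.2⟩⟩
  loopless := ⟨fun _ h => h.1 rfl⟩

/-- A set of vertices is biconnected if it induces a connected undirected graph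
with no cutvertex. -/
def IsBiconn (N : Network X) (B : Set N.V) : Prop :=
  (N.UG.induce B).Connected ∧ ∀ v ∈ B, (N.UG.induce (B \ {v})).Preconnected

/-- A block: a maximal biconnected set of vertices. -/
def IsBlock (N : Network X) (B : Set N.V) : Prop :=
  N.IsBiconn B ∧ ∀ B' : Set N.V, B ⊆ B' → N.IsBiconn B' → B' = B

/-- The set `B` contains an undirected cycle (`B` is a non-trivial block when it is
a block). -/
def HasCycleIn (N : Network X) (B : Set N.V) : Prop :=
  ∃ (v : N.V) (c : N.UG.Walk v v), c.IsCycle ∧ ∀ w ∈ c.support, w ∈ B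

/-- Level-1: each block contains at most one hybrid vertex that is not
`⪯`-maximal in the block. -/
def Level1 (N : Network X) : Prop :=
  ∀ B : Set N.V, N.IsBlock B →
    Set.Subsingleton {v : N.V | v ∈ B ∧ N.IsHybrid v ∧ ∃ u ∈ B, u ≠ v ∧ N.reach u v}

/-- The set `B` (with the edges of the underlying undirected graph between its
members) is exactly an undirected cycle. -/
def IsCycleSet (N : Network X) (B : Set N.V) : Prop :=
  ∃ (v : N.V) (c : N.UG.Walk v v), c.IsCycle ∧ (∀ w : N.V, w ∈ c.support ↔ w ∈ B) ∧
    ∀ u w : N.V, (N.UG.Adj u w ∧ u ∈ B ∧ w ∈ B) ↔ s(u, w) ∈ c.edges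

/-- A galled tree: every non-trivial block is an undirected cycle. -/
def GalledTree (N : Network X) : Prop :=
  ∀ B : Set N.V, N.IsBlock B → N.HasCycleIn B → N.IsCycleSet B

/-- Quasi-binary: hybrid vertices have indegree 2 and outdegree 1, and the
`⪯`-maximal vertex of every non-trivial block has outdegree 2. -/
def QuasiBinary (N : Network X) : Prop :=
  (∀ v : N.V, N.IsHybrid v → N.inDeg v = 2 ∧ N.outDeg v = 1) ∧
  ∀ B : Set N.V, N.IsBlock B → N.HasCycleIn B →
    ∀ v ∈ B, (∀ u ∈ B, N.reach u v → u = v) → N.outDeg v = 2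

/-- `LCA A`: the `⪯`-minimal vertices among the common ancestors of `A`. -/
def LCA (N : Network X) (A : Set X) : Set N.V :=
  {v : N.V | A ⊆ N.cluster v ∧ ∀ u : N.V, A ⊆ N.cluster u → N.reach v u → u = v}

/-- An lca-network: every nonempty set of leaves has a unique least common
ancestor. -/
def LcaNetwork (N : Network X) : Prop :=
  ∀ A : Set X, A.Nonempty → ∃ v : N.V, N.LCA A = {v}

/-- A strong lca-network. -/
def StrongLca (N : Network X) : Prop :=
  N.LcaNetwork ∧
  ∀ A : Set X, A.Nonempty → ∃ x ∈ A, ∃ y ∈ A, N.LCA ({x, y} : Set X) = N.LCA A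

/-- Cluster networks in the sense of Huson & Rupp. -/
def ClusterNetwork (N : Network X) : Prop :=
  N.PCC ∧
  (∀ u v : N.V, N.cluster u = N.cluster v ↔
    (u = v ∨ (N.IsHybrid v ∧ N.E v u) ∨ (N.IsHybrid u ∧ N.E u v))) ∧
  (∀ u v : N.V, N.E v u →
    ¬ ∃ w : N.V, N.cluster u ⊂ N.cluster w ∧ N.cluster w ⊂ N.cluster v) ∧
  (∀ v : N.V, N.IsHybrid v →
    ∃ u : N.V, N.E v u ∧ (∀ w : N.V, N.E v w → w = u) ∧ N.IsTreeVertex u)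

/-- The multiplicity of a cluster in the cluster multiset `𝓜_N`. -/
noncomputable def multiplicity (N : Network X) (C : Set X) : ℕ :=
  Nat.card {v : N.V // N.cluster v = C}

/-- Isomorphism of networks on the same leaf set `X`, fixing every leaf. -/
def Isomorphic (N N' : Network X) : Prop :=
  ∃ φ : N.V ≃ N'.V, (∀ u v : N.V, N.E u v ↔ N'.E (φ u) (φ v)) ∧
    ∀ x : X, φ (N.leafEmb x) = N'.leafEmb x

end Network

/-- A clustering system on `X`. -/
def IsClusteringSystem {X : Type} (𝒞 : Set (Set X)) : Prop :=
  ∅ ∉ 𝒞 ∧ Set.univ ∈ 𝒞 ∧ ∀ x : X, {x} ∈ 𝒞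

/-- Two sets overlap if `A ∩ B ∉ {∅, A, B}`. -/
def Overlap {X : Type} (A B : Set X) : Prop :=
  (A ∩ B).Nonempty ∧ A ∩ B ≠ A ∧ A ∩ B ≠ B

/-- Closed (under pairwise nonempty intersections). -/
def IsClosedCS {X : Type} (𝒞 : Set (Set X)) : Prop :=
  ∀ A ∈ 𝒞, ∀ B ∈ 𝒞, (A ∩ B).Nonempty → A ∩ B ∈ 𝒞

/-- Property (L). -/
def PropertyL {X : Type} (𝒞 : Set (Set X)) : Prop :=
  ∀ C₁ ∈ 𝒞, ∀ C₂ ∈ 𝒞, ∀ C₃ ∈ 𝒞, Overlap C₁ C₂ → Overlap C₁ C₃ → C₁ ∩ C₂ = C₁ ∩ C₃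

/-- Weak hierarchy. -/
def WeakHierarchy {X : Type} (𝒞 : Set (Set X)) : Prop :=
  ∀ C₁ ∈ 𝒞, ∀ C₂ ∈ 𝒞, ∀ C₃ ∈ 𝒞,
    C₁ ∩ C₂ ∩ C₃ = C₁ ∩ C₂ ∨ C₁ ∩ C₂ ∩ C₃ = C₁ ∩ C₃ ∨
    C₁ ∩ C₂ ∩ C₃ = C₂ ∩ C₃ ∨ C₁ ∩ C₂ ∩ C₃ = ∅

/-- Property (N3O): no three distinct pairwise overlapping clusters. -/
def N3O {X : Type} (𝒞 : Set (Set X)) : Prop :=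
  ¬ ∃ C₁ ∈ 𝒞, ∃ C₂ ∈ 𝒞, ∃ C₃ ∈ 𝒞,
    C₁ ≠ C₂ ∧ C₁ ≠ C₃ ∧ C₂ ≠ C₃ ∧ Overlap C₁ C₂ ∧ Overlap C₁ C₃ ∧ Overlap C₂ C₃

/-- Property (2-Inc). -/
def TwoInc {X : Type} (𝒞 : Set (Set X)) : Prop :=
  ∀ C ∈ 𝒞,
    {A : Set X | A ∈ 𝒞 ∧ A ⊂ C ∧ ∀ B ∈ 𝒞, B ⊂ C → A ⊆ B → A = B}.ncard ≤ 2 ∧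
    {A : Set X | A ∈ 𝒞 ∧ C ⊂ A ∧ ∀ B ∈ 𝒞, C ⊂ B → B ⊆ A → A = B}.ncard ≤ 2

/-- The intersection closure: all nonempty intersections of nonempty subfamilies. -/
def interClosure {X : Type} (𝒞 : Set (Set X)) : Set (Set X) :=
  {A : Set X | A.Nonempty ∧ ∃ S : Set (Set X), S ⊆ 𝒞 ∧ S.Nonempty ∧ A = ⋂₀ S}

/-!
Necessity of (L). If `C(u)` overlaps `C(v)`, then `u` and `v` are incomparable and
`C(u) ∩ C(v) = C(z)` for a maximal common descendant `z` of `u` and `v`, which is a hybrid.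
In a level-1 network `z` is unique, and for a third vertex `w` with `C(u)` overlapping `C(w)`
the corresponding `z'` equals `z`: otherwise directed paths from `u`, `v`, `w` and the root
to `z` and `z'` close up a cycle, hence a biconnected set, containing two distinct hybrids
that are not maximal in it.

Sufficiency of (L). Under (L) every member of `𝓘(𝒞)` is the intersection of two members of
`𝒞`, and the intersection of two overlapping members overlaps no member, so (L) passes to
`𝓘(𝒞)`. The Hasse diagram of `𝓘(𝒞)` is a network whose clustering system is `𝓘(𝒞)`. Each of
its hybrids `v` is the intersection of two overlapping parents, hence comparable with or
disjoint from every cluster. If `v` is not maximal in a block `B`, then `v ⊆ t` for all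
`t ∈ B`: otherwise take an inclusion-minimal arc `W → y` of `B` with `v ⊆ W` and `y` disjoint
from `v`; depending on how `W` overlaps other clusters, either `W` or its intersection with an
overlapping cluster is a cut vertex of `B` separating `v` from `y`. So two such hybrids of `B`
contain each other.
-/

open Set

section SetFamilies

variable {A B E F G H : Set X} {𝒞 𝒟 : Set (Set X)}

lemma Overlap.symm (h : Overlap A B) : Overlap B A := by
  obtain ⟨h₁, h₂, h₃⟩ := h
  rw [inter_comm] at h₁ h₂ h₃
  exact ⟨h₁, h₃, h₂⟩

lemma overlap_iff : Overlap A B ↔ (A ∩ B).Nonempty ∧ ¬ A ⊆ B ∧ ¬ B ⊆ A := by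
  rw [Overlap, Ne, Ne, inter_eq_left, inter_eq_right]

lemma subset_or_subset_or_overlap (h : (A ∩ B).Nonempty) : A ⊆ B ∨ B ⊆ A ∨ Overlap A B := by
  by_cases hAB : A ⊆ B
  · exact Or.inl hAB
  by_cases hBA : B ⊆ A
  · exact Or.inr (Or.inl hBA)
  exact Or.inr (Or.inr (overlap_iff.mpr ⟨h, hAB, hBA⟩))

lemma not_disjoint_of_subset (hA : A.Nonempty) (h : A ⊆ B) : ¬ Disjoint A B :=
  fun hAB => hA.ne_empty (hAB.eq_bot_of_le h)

lemma not_overlap_iff : ¬ Overlap A B ↔ A ⊆ B ∨ B ⊆ A ∨ Disjoint A B := by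
  rw [overlap_iff, disjoint_iff_inter_eq_empty, ← not_nonempty_iff_eq_empty]
  tauto

lemma not_overlap_inter (hG : ¬ Overlap A G) (hH : ¬ Overlap A H) : ¬ Overlap A (G ∩ H) := by
  rw [not_overlap_iff] at *
  rcases hG with hAG | hGA | hAG
  · rcases hH with hAH | hHA | hAH
    · exact Or.inl (subset_inter hAG hAH)
    · exact Or.inr (Or.inl (inter_subset_right.trans hHA))
    · exact Or.inr (Or.inr (hAH.mono_right inter_subset_right))
  · exact Or.inr (Or.inl (inter_subset_left.trans hGA))
  · exact Or.inr (Or.inr (hAG.mono_right inter_subset_left))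

lemma PropertyL.mono (hL : PropertyL 𝒟) (h : 𝒞 ⊆ 𝒟) : PropertyL 𝒞 :=
  fun _ h₁ _ h₂ _ h₃ => hL _ (h h₁) _ (h h₂) _ (h h₃)

lemma PropertyL.inter_not_overlap (hL : PropertyL 𝒟) (hE : E ∈ 𝒟) (hF : F ∈ 𝒟)
    (hEF : Overlap E F) (hA : A ∈ 𝒟) : ¬ Overlap (E ∩ F) A := by
  rw [overlap_iff]
  rintro ⟨hmeet, hEFA, hAEF⟩
  have hAE : (A ∩ E).Nonempty := by
    rw [inter_comm]; exact hmeet.mono (inter_subset_inter_left A inter_subset_left)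
  have hAF : (A ∩ F).Nonempty := by
    rw [inter_comm]; exact hmeet.mono (inter_subset_inter_left A inter_subset_right)
  refine hEFA ?_
  rcases subset_or_subset_or_overlap hAE with hAE' | hEA | hovE
  · rcases subset_or_subset_or_overlap hAF with hAF' | hFA | hovF
    · exact absurd (subset_inter hAE' hAF') hAEF
    · exact inter_subset_right.trans hFA
    · rw [inter_comm E F, hL F hF E hE A hA hEF.symm hovF.symm]
      exact inter_subset_right
  · exact inter_subset_left.trans hEA
  · rw [hL E hE F hF A hA hEF hovE.symm]
    exact inter_subset_right

lemma inter_mem_of_not_overlap (hE : E ∈ 𝒞) (hF : F ∈ 𝒞) (hEF : ¬ Overlap E F)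
    (hne : (E ∩ F).Nonempty) : E ∩ F ∈ 𝒞 := by
  rcases not_overlap_iff.mp hEF with h | h | h
  · rwa [inter_eq_left.mpr h]
  · rwa [inter_eq_right.mpr h]
  · exact absurd h (not_disjoint_iff_nonempty_inter.mpr hne)

lemma subset_interClosure (h𝒞 : ∅ ∉ 𝒞) : 𝒞 ⊆ interClosure 𝒞 := fun A hA =>
  ⟨nonempty_iff_ne_empty.mpr (fun h => h𝒞 (h ▸ hA)), {A}, singleton_subset_iff.mpr hA,
    singleton_nonempty A, (sInter_singleton A).symm⟩

lemma isClosedCS_interClosure (𝒞 : Set (Set X)) : IsClosedCS (interClosure 𝒞) := by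
  rintro _ ⟨-, S, hS, hSne, rfl⟩ _ ⟨-, T, hT, -, rfl⟩ hne
  exact ⟨hne, S ∪ T, union_subset hS hT, hSne.mono subset_union_left, (sInter_union S T).symm⟩

lemma PropertyL.exists_inter_eq_inter (hL : PropertyL 𝒞) (hA : A ∈ 𝒞) (hE : E ∈ 𝒞)
    (hF : F ∈ 𝒞) (hne : (A ∩ (E ∩ F)).Nonempty) : ∃ G ∈ 𝒞, ∃ H ∈ 𝒞, A ∩ (E ∩ F) = G ∩ H := by
  by_cases hEF : Overlap E F
  · rcases not_overlap_iff.mp (hL.inter_not_overlap hE hF hEF hA) with h | h | h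
    · exact ⟨E, hE, F, hF, inter_eq_right.mpr h⟩
    · exact ⟨A, hA, A, hA, by rw [inter_eq_left.mpr h, inter_self]⟩
    · exact absurd h.symm (not_disjoint_iff_nonempty_inter.mpr hne)
  · exact ⟨A, hA, E ∩ F, inter_mem_of_not_overlap hE hF hEF (hne.mono inter_subset_right),
      rfl⟩

lemma PropertyL.exists_eq_inter_of_mem_interClosure [Finite X] (hL : PropertyL 𝒞)
    (hA : A ∈ interClosure 𝒞) : ∃ E ∈ 𝒞, ∃ F ∈ 𝒞, A = E ∩ F := by
  obtain ⟨hne, S, hS𝒞, hSne, rfl⟩ := hA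
  induction S, S.toFinite using Set.Finite.induction_on with
  | empty => exact absurd hSne not_nonempty_empty
  | @insert a S _ _ ih =>
    rw [sInter_insert] at hne ⊢
    have ha : a ∈ 𝒞 := hS𝒞 (mem_insert a S)
    rcases S.eq_empty_or_nonempty with rfl | hS
    · exact ⟨a, ha, a, ha, by simp⟩
    obtain ⟨E, hE, F, hF, hEF⟩ :=
      ih ((subset_insert a S).trans hS𝒞) hS (hne.mono inter_subset_right)
    rw [hEF] at hne ⊢
    exact hL.exists_inter_eq_inter ha hE hF hne

lemma PropertyL.mem_of_overlap [Finite X] (hL : PropertyL 𝒞) (hA : A ∈ interClosure 𝒞)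
    (hB : B ∈ interClosure 𝒞) (hAB : Overlap A B) : A ∈ 𝒞 := by
  obtain ⟨E, hE, F, hF, rfl⟩ := hL.exists_eq_inter_of_mem_interClosure hA
  obtain ⟨G, hG, H, hH, rfl⟩ := hL.exists_eq_inter_of_mem_interClosure hB
  refine inter_mem_of_not_overlap hE hF (fun hEF => ?_) (hAB.1.mono inter_subset_left)
  exact not_overlap_inter (hL.inter_not_overlap hE hF hEF hG)
    (hL.inter_not_overlap hE hF hEF hH) hAB

lemma propertyL_interClosure [Finite X] (hL : PropertyL 𝒞) : PropertyL (interClosure 𝒞) :=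
  fun _ h₁ _ h₂ _ h₃ h₁₂ h₁₃ => hL _ (hL.mem_of_overlap h₁ h₂ h₁₂)
    _ (hL.mem_of_overlap h₂ h₁ h₁₂.symm) _ (hL.mem_of_overlap h₃ h₁ h₁₃.symm) h₁₂ h₁₃

end SetFamilies

inductive RelPath {α : Type*} (r : α → α → Prop) : α → α → List α → Prop
  | single (a : α) : RelPath r a a [a]
  | cons {a b c : α} {l : List α} : r a b → RelPath r b c l → RelPath r a c (a :: l)

namespace RelPath

variable {α : Type*} {r : α → α → Prop} {a b c t z : α} {l m : List α}

lemma head_mem (h : RelPath r a b l) : a ∈ l := by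
  cases h <;> simp

lemma last_mem (h : RelPath r a b l) : b ∈ l := by
  induction h with
  | single => simp
  | cons _ _ ih => exact List.mem_cons_of_mem _ ih

lemma exists_cons (h : RelPath r a b l) : ∃ t, l = a :: t := by
  cases h <;> exact ⟨_, rfl⟩

lemma mono {r' : α → α → Prop} (hr : ∀ ⦃x y⦄, r x y → r' x y) (h : RelPath r a b l) :
    RelPath r' a b l := by
  induction h with
  | single a => exact single a
  | cons hab _ ih => exact cons (hr hab) ih

lemma append (h₁ : RelPath r a b l) (h₂ : RelPath r b c m) : RelPath r a c (l ++ m.tail) := by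
  induction h₁ with
  | single =>
    cases h₂ with
    | single => exact single _
    | cons hab h => exact cons hab h
  | cons hab _ ih => exact cons hab (ih h₂)

lemma reverse (hr : ∀ ⦃x y⦄, r x y → r y x) (h : RelPath r a b l) : RelPath r b a l.reverse := by
  induction h with
  | single a => exact single a
  | cons hab _ ih => simpa using ih.append (cons (hr hab) (single _))

lemma reflTransGen (h : RelPath r a b l) : Relation.ReflTransGen r a b := by
  induction h with
  | single => exact .refl
  | cons hab _ ih => exact .head hab ih

lemma exists_of_reflTransGen (h : Relation.ReflTransGen r a b) : ∃ l, RelPath r a b l := by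
  induction h using Relation.ReflTransGen.head_induction_on with
  | refl => exact ⟨_, single b⟩
  | head hab _ ih =>
    obtain ⟨l, hl⟩ := ih
    exact ⟨_, cons hab hl⟩

lemma exists_prefix (h : RelPath r a b l) (ht : t ∈ l) : ∃ m ⊆ l, RelPath r a t m := by
  induction h with
  | single =>
    obtain rfl := List.mem_singleton.mp ht
    exact ⟨_, List.Subset.refl _, single t⟩
  | @cons a _ _ l hab _ ih =>
    rcases List.mem_cons.mp ht with rfl | ht
    · exact ⟨[t], by simp, single t⟩
    · obtain ⟨m, hm, hpath⟩ := ih ht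
      exact ⟨a :: m, List.cons_subset_cons a hm, cons hab hpath⟩

lemma exists_suffix (h : RelPath r a b l) (ht : t ∈ l) : ∃ m ⊆ l, RelPath r t b m := by
  induction h with
  | single =>
    obtain rfl := List.mem_singleton.mp ht
    exact ⟨_, List.Subset.refl _, single t⟩
  | @cons a _ _ l hab h ih =>
    rcases List.mem_cons.mp ht with rfl | ht
    · exact ⟨_, List.Subset.refl _, cons hab h⟩
    · obtain ⟨m, hm, hpath⟩ := ih ht
      exact ⟨m, List.subset_cons_of_subset _ hm, hpath⟩

lemma reflTransGen_head_of_mem (h : RelPath r a b l) (ht : t ∈ l) : Relation.ReflTransGen r a t :=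
  (h.exists_prefix ht).elim fun _ hm => hm.2.reflTransGen

lemma reflTransGen_last_of_mem (h : RelPath r a b l) (ht : t ∈ l) : Relation.ReflTransGen r t b :=
  (h.exists_suffix ht).elim fun _ hm => hm.2.reflTransGen

lemma exists_mem_rel_last (h : RelPath r a b l) (hab : a ≠ b) : ∃ p ∈ l, r p b := by
  induction h with
  | single => exact absurd rfl hab
  | @cons a b' c _ hab' _ ih =>
    by_cases hb' : b' = c
    · exact ⟨a, List.mem_cons_self, hb' ▸ hab'⟩
    · obtain ⟨p, hp, hpc⟩ := ih hb'
      exact ⟨p, List.mem_cons_of_mem _ hp, hpc⟩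

lemma nodup (hr : ∀ x y, r x y → ¬ Relation.ReflTransGen r y x) (h : RelPath r a b l) :
    l.Nodup := by
  induction h with
  | single => simp
  | cons hab h ih =>
    exact List.nodup_cons.mpr ⟨fun ha => hr _ _ hab (h.reflTransGen_head_of_mem ha), ih⟩

lemma exists_subpath_not_mem (h : RelPath r a b l) (hl : l.Nodup) (ht : t ∈ l) (htz : t ≠ z) :
    (∃ m ⊆ l, z ∉ m ∧ RelPath r a t m) ∨ (∃ m ⊆ l, z ∉ m ∧ RelPath r t b m) := by
  induction h with
  | single =>
    obtain rfl := List.mem_singleton.mp ht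
    exact Or.inl ⟨_, List.Subset.refl _, by simpa using htz.symm, single t⟩
  | @cons a _ _ l hab h ih =>
    obtain ⟨hal, hl⟩ := List.nodup_cons.mp hl
    rcases List.mem_cons.mp ht with rfl | ht
    · exact Or.inl ⟨[t], by simp, by simpa using htz.symm, single t⟩
    by_cases hza : z = a
    · obtain ⟨m, hm, hpath⟩ := h.exists_suffix ht
      exact Or.inr ⟨m, List.subset_cons_of_subset _ hm, fun hz => hal (hza ▸ hm hz), hpath⟩
    rcases ih hl ht with ⟨m, hm, hzm, hpath⟩ | ⟨m, hm, hzm, hpath⟩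
    · exact Or.inl ⟨a :: m, List.cons_subset_cons a hm, by simp [hza, hzm], cons hab hpath⟩
    · exact Or.inr ⟨m, List.subset_cons_of_subset _ hm, hzm, hpath⟩

lemma exists_last_mem (h : RelPath r a b l) {S : Set α} (hS : ∃ t ∈ l, t ∈ S) :
    ∃ c ∈ S, ∃ m ⊆ l, RelPath r c b m ∧ (∀ t ∈ m, t ∈ S → t = c) ∧
      ∀ t ∈ l, t ∈ m ∨ Relation.ReflTransGen r t c := by
  induction h with
  | single a =>
    obtain ⟨t, ht, htS⟩ := hS
    obtain rfl := List.mem_singleton.mp ht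
    exact ⟨t, htS, _, List.Subset.refl _, single t, by simp, by simp⟩
  | @cons a _ _ l hab h ih =>
    by_cases hlS : ∃ t ∈ l, t ∈ S
    · obtain ⟨c, hcS, m, hm, hpath, hlast, hbefore⟩ := ih hlS
      refine ⟨c, hcS, m, List.subset_cons_of_subset _ hm, hpath, hlast, ?_⟩
      intro t ht
      rcases List.mem_cons.mp ht with rfl | ht
      · exact Or.inr (.head hab (h.reflTransGen_head_of_mem (hm hpath.head_mem)))
      · exact hbefore t ht
    · obtain ⟨t, ht, htS⟩ := hS
      obtain rfl : t = a := (List.mem_cons.mp ht).resolve_right fun ht => hlS ⟨t, ht, htS⟩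
      refine ⟨t, htS, _, List.Subset.refl _, cons hab h, ?_, fun _ hs => Or.inl hs⟩
      intro s hs hsS
      rcases List.mem_cons.mp hs with rfl | hs
      · rfl
      · exact absurd ⟨s, hs, hsS⟩ hlS

lemma exists_disjoint_suffixes (h₁ : RelPath r a b l) (h₂ : RelPath r a c m) :
    ∃ d, ∃ l' ⊆ l, ∃ m' ⊆ m, RelPath r d b l' ∧ RelPath r d c m' ∧ ∀ x ∈ l', x ∈ m' → x = d := by
  obtain ⟨d, hd, l', hl', hpath₁, hlast, -⟩ :=
    h₁.exists_last_mem (S := {x | x ∈ m}) ⟨a, h₁.head_mem, h₂.head_mem⟩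
  obtain ⟨m', hm', hpath₂⟩ := h₂.exists_suffix hd
  exact ⟨d, l', hl', m', hm', hpath₁, hpath₂, fun x hx hxm => hlast x hx (hm' hxm)⟩

lemma append_reverse (hr : ∀ ⦃x y⦄, r x y → r y x) (h₁ : RelPath r a c l) (h₂ : RelPath r b c m)
    (hl : l.Nodup) (hm : m.Nodup) (hlm : ∀ x ∈ l, x ∈ m → x = c) :
    RelPath r a b (l ++ m.reverse.tail) ∧ (l ++ m.reverse.tail).Nodup ∧
      ∀ x ∈ l ++ m.reverse.tail, x ∈ l ∨ x ∈ m := by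
  have hrev := h₂.reverse hr
  obtain ⟨t, ht⟩ := hrev.exists_cons
  have hct : c ∉ t ∧ t.Nodup := List.nodup_cons.mp (ht ▸ List.nodup_reverse.mpr hm)
  have htm : ∀ x ∈ t, x ∈ m := fun x hx => List.mem_reverse.mp (ht ▸ List.mem_cons_of_mem c hx)
  have hpath := h₁.append hrev
  rw [ht, List.tail_cons] at hpath ⊢
  refine ⟨hpath, List.nodup_append.mpr ⟨hl, hct.2, ?_⟩, ?_⟩
  · rintro x hxl y hyt rfl
    exact hct.1 (hlm x hxl (htm x hyt) ▸ hyt)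
  · intro x hx
    rcases List.mem_append.mp hx with hx | hx
    · exact Or.inl hx
    · exact Or.inr (htm x hx)

end RelPath

section InducedReachable

variable {V : Type*} (G : SimpleGraph V)

def InducedReachable (s : Set V) (u v : V) : Prop :=
  ∃ (hu : u ∈ s) (hv : v ∈ s), (G.induce s).Reachable ⟨u, hu⟩ ⟨v, hv⟩

variable {G} {s : Set V} {u v w : V}

lemma InducedReachable.refl (hu : u ∈ s) : InducedReachable G s u u := ⟨hu, hu, .refl _⟩

lemma InducedReachable.symm (h : InducedReachable G s u v) : InducedReachable G s v u :=
  let ⟨hu, hv, h⟩ := h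
  ⟨hv, hu, h.symm⟩

lemma InducedReachable.trans (h₁ : InducedReachable G s u v) (h₂ : InducedReachable G s v w) :
    InducedReachable G s u w :=
  ⟨h₁.1, h₂.2.1, h₁.2.2.trans h₂.2.2⟩

lemma InducedReachable.of_relPath {l : List V} (h : RelPath G.Adj u v l) (hl : ∀ x ∈ l, x ∈ s) :
    InducedReachable G s u v := by
  induction h with
  | single u => exact .refl (hl u (by simp))
  | cons hab h ih =>
    have hu := hl _ List.mem_cons_self
    have hb := hl _ (List.mem_cons_of_mem _ h.head_mem)
    have hstep : InducedReachable G s _ _ := ⟨hu, hb, SimpleGraph.Adj.reachable (by exact hab)⟩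
    exact hstep.trans (ih fun x hx => hl x (List.mem_cons_of_mem _ hx))

lemma preconnected_induce_of_reach_ends {a b : V}
    (h : ∀ t ∈ s, InducedReachable G s t a ∨ InducedReachable G s t b)
    (hab : a ∈ s → b ∈ s → InducedReachable G s a b) : (G.induce s).Preconnected := by
  rintro ⟨t, ht⟩ ⟨t', ht'⟩
  suffices InducedReachable G s t t' from this.2.2
  rcases h t ht with hta | htb <;> rcases h t' ht' with hta' | htb'
  · exact hta.trans hta'.symm
  · exact hta.trans ((hab hta.2.1 htb'.2.1).trans htb'.symm)
  · exact htb.trans ((hab hta'.2.1 htb.2.1).symm.trans hta'.symm)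
  · exact htb.trans htb'.symm

lemma forall_of_induce_preconnected (hs : (G.induce s).Preconnected) (P : V → Prop)
    (hP : ∀ u ∈ s, ∀ v ∈ s, G.Adj u v → P u → P v) {a b : V} (ha : a ∈ s) (hb : b ∈ s)
    (hPa : P a) : P b := by
  obtain ⟨p⟩ := hs ⟨a, ha⟩ ⟨b, hb⟩
  suffices ∀ x y : s, (G.induce s).Walk x y → P x → P y from this _ _ p hPa
  intro x y p
  induction p with
  | nil => exact id
  | cons hxy _ ih => exact fun hx => ih (hP _ (Subtype.prop _) _ (Subtype.prop _) hxy hx)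

lemma connected_induce_of_relPaths {c z : V} {l₁ l₂ : List V} (h₁ : RelPath G.Adj c z l₁)
    (h₂ : RelPath G.Adj c z l₂) : (G.induce {x | x ∈ l₁ ∨ x ∈ l₂}).Connected := by
  have hub : ∀ {l}, RelPath G.Adj c z l → (∀ x ∈ l, x ∈ l₁ ∨ x ∈ l₂) → ∀ t ∈ l,
      InducedReachable G {x | x ∈ l₁ ∨ x ∈ l₂} t c := by
    intro l h hsub t ht
    obtain ⟨m, hm, hpath⟩ := h.exists_prefix ht
    exact (InducedReachable.of_relPath hpath fun x hx => hsub x (hm hx)).symm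
  rw [SimpleGraph.connected_iff]
  refine ⟨preconnected_induce_of_reach_ends (a := c) (b := c) ?_ fun _ hc => .refl hc,
    ⟨c, Or.inl h₁.head_mem⟩⟩
  rintro t (ht | ht)
  · exact Or.inl (hub h₁ (fun x hx => Or.inl hx) t ht)
  · exact Or.inl (hub h₂ (fun x hx => Or.inr hx) t ht)

/-- A cycle, given as two internally disjoint paths, stays connected after deleting a vertex. -/
lemma preconnected_induce_diff_of_relPaths {c z : V} {l₁ l₂ : List V}
    (h₁ : RelPath G.Adj c z l₁) (h₂ : RelPath G.Adj c z l₂) (hl₁ : l₁.Nodup) (hl₂ : l₂.Nodup)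
    (hint : ∀ x ∈ l₁, x ∈ l₂ → x = c ∨ x = z) (w : V) :
    (G.induce ({x | x ∈ l₁ ∨ x ∈ l₂} \ {w})).Preconnected := by
  set s := {x | x ∈ l₁ ∨ x ∈ l₂} \ {w}
  have hs : ∀ {l m : List V}, (∀ x ∈ l, x ∈ l₁ ∨ x ∈ l₂) → m ⊆ l → w ∉ m → ∀ x ∈ m, x ∈ s :=
    fun hl hm hwm x hx => ⟨hl x (hm hx), fun hxw => hwm (Set.mem_singleton_iff.mp hxw ▸ hx)⟩
  have along : ∀ {l}, RelPath G.Adj c z l → l.Nodup → (∀ x ∈ l, x ∈ l₁ ∨ x ∈ l₂) → ∀ t ∈ l,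
      t ≠ w → InducedReachable G s t c ∨ InducedReachable G s t z := by
    intro l h hl hsub t ht htw
    rcases h.exists_subpath_not_mem hl ht htw with ⟨m, hm, hwm, hpath⟩ | ⟨m, hm, hwm, hpath⟩
    · exact Or.inl (InducedReachable.of_relPath hpath (hs hsub hm hwm)).symm
    · exact Or.inr (InducedReachable.of_relPath hpath (hs hsub hm hwm))
  refine preconnected_induce_of_reach_ends (a := c) (b := z) ?_ ?_
  · rintro t ⟨ht | ht, htw⟩
    · exact along h₁ hl₁ (fun x hx => Or.inl hx) t ht htw
    · exact along h₂ hl₂ (fun x hx => Or.inr hx) t ht htw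
  · rintro ⟨-, hcw⟩ ⟨-, hzw⟩
    have hw : w ∉ l₁ ∨ w ∉ l₂ := by
      by_contra! hw
      rcases hint w hw.1 hw.2 with rfl | rfl
      · exact hcw rfl
      · exact hzw rfl
    rcases hw with hw | hw
    · exact InducedReachable.of_relPath h₁ (hs (fun x hx => Or.inl hx) (List.Subset.refl _) hw)
    · exact InducedReachable.of_relPath h₂ (hs (fun x hx => Or.inr hx) (List.Subset.refl _) hw)

end InducedReachable

namespace Network

variable {N : Network X} {r u v w x z z₁ z₂ : N.V} {s : Set N.V}

lemma reach_antisymm (h₁ : N.reach u v) (h₂ : N.reach v u) : u = v := by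
  rcases Relation.ReflTransGen.cases_head h₁ with h | ⟨c, huc, hcv⟩
  · exact h
  · exact absurd (hcv.trans h₂) (N.acyclic u c huc)

lemma ne_of_E (h : N.E u v) : u ≠ v := by
  rintro rfl
  exact N.acyclic u u h .refl

lemma cluster_subset_of_reach (h : N.reach u v) : N.cluster v ⊆ N.cluster u :=
  fun _ hx => h.trans hx

lemma not_reach_of_overlap (h : Overlap (N.cluster u) (N.cluster v)) :
    ¬ N.reach u v ∧ ¬ N.reach v u :=
  ⟨fun huv => h.2.2 (inter_eq_right.mpr (cluster_subset_of_reach huv)),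
    fun hvu => h.2.1 (inter_eq_left.mpr (cluster_subset_of_reach hvu))⟩

lemma UG_adj_of_E : ∀ ⦃u v : N.V⦄, N.E u v → N.UG.Adj u v := fun _ _ h => ⟨ne_of_E h, Or.inl h⟩

lemma nodup_of_relPath {l : List N.V} (h : RelPath N.E u v l) : l.Nodup := h.nodup N.acyclic

lemma isHybrid_iff : N.IsHybrid v ↔ ∃ p q, N.E p v ∧ N.E q v ∧ p ≠ q :=
  Set.one_lt_ncard_iff (toFinite _)

lemma isHybrid_of_relPaths {a b : List N.V} (ha : RelPath N.E u z a) (hb : RelPath N.E v z b)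
    (hab : ∀ x ∈ a, x ∈ b → x = z) (huz : u ≠ z) (hvz : v ≠ z) : N.IsHybrid z := by
  obtain ⟨p, hpa, hp⟩ := ha.exists_mem_rel_last huz
  obtain ⟨q, hqb, hq⟩ := hb.exists_mem_rel_last hvz
  refine isHybrid_iff.mpr ⟨p, q, hp, hq, fun hpq => ne_of_E hp (hab p hpa (hpq ▸ hqb))⟩

lemma exists_maximal_reach (S : Set N.V) (hx : x ∈ S) :
    ∃ z ∈ S, N.reach z x ∧ ∀ z' ∈ S, N.reach z' z → z' = z := by
  obtain ⟨z, ⟨hzS, hzx⟩, hmin⟩ := Set.Finite.exists_minimalFor (fun z => {w | N.reach w z})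
    {z | z ∈ S ∧ N.reach z x} (toFinite _) ⟨x, hx, .refl⟩
  refine ⟨z, hzS, hzx, fun z' hz'S hz'z => reach_antisymm hz'z ?_⟩
  exact hmin ⟨hz'S, hz'z.trans hzx⟩ (fun w hw => Relation.ReflTransGen.trans hw hz'z)
    (Relation.ReflTransGen.refl : N.reach z z)

lemma exists_reach_all (N : Network X) : ∃ r, ∀ v, N.reach r v := by
  obtain ⟨r, -, hr⟩ := N.root_unique
  refine ⟨r, fun v => ?_⟩
  obtain ⟨z, -, hzv, hmax⟩ := exists_maximal_reach (N := N) univ (mem_univ v)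
  rwa [← hr z fun u huz => ne_of_E huz (hmax u (mem_univ u) (.single huz))]

def IsLowerHybrid (N : Network X) (s : Set N.V) (v : N.V) : Prop :=
  v ∈ s ∧ N.IsHybrid v ∧ ∃ u ∈ s, u ≠ v ∧ N.reach u v

lemma exists_isBlock_superset (hs : N.IsBiconn s) : ∃ B, N.IsBlock B ∧ s ⊆ B := by
  obtain ⟨B, ⟨hsB, hB⟩, hmax⟩ := Set.Finite.exists_maximalFor (fun B => B.ncard)
    {B | s ⊆ B ∧ N.IsBiconn B} (toFinite _) ⟨s, subset_rfl, hs⟩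
  refine ⟨B, ⟨hB, fun B' hBB' hB' => ?_⟩, hsB⟩
  have hle := hmax ⟨hsB.trans hBB', hB'⟩ (ncard_le_ncard hBB' (toFinite _))
  exact (eq_of_subset_of_ncard_le hBB' hle (toFinite _)).symm

lemma Level1.eq_of_isBiconn (hN : N.Level1) (hs : N.IsBiconn s) (h₁ : N.IsLowerHybrid s z₁)
    (h₂ : N.IsLowerHybrid s z₂) : z₁ = z₂ := by
  obtain ⟨B, hB, hsB⟩ := exists_isBlock_superset hs
  have mono : ∀ {z}, N.IsLowerHybrid s z → N.IsLowerHybrid B z :=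
    fun ⟨hz, hhyb, u, hu, huz, hr⟩ => ⟨hsB hz, hhyb, u, hsB hu, huz, hr⟩
  exact hN B hB (mono h₁) (mono h₂)

lemma IsBiconn.preconnected_diff (hs : N.IsBiconn s) (w : N.V) :
    (N.UG.induce (s \ {w})).Preconnected := by
  by_cases hw : w ∈ s
  · exact hs.2 w hw
  · rw [sdiff_singleton_eq_self hw]
    exact hs.1.preconnected

lemma isBiconn_of_relPaths {c z : N.V} {l₁ l₂ : List N.V} (h₁ : RelPath N.UG.Adj c z l₁)
    (h₂ : RelPath N.UG.Adj c z l₂) (hl₁ : l₁.Nodup) (hl₂ : l₂.Nodup)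
    (hint : ∀ x ∈ l₁, x ∈ l₂ → x = c ∨ x = z) : N.IsBiconn {x | x ∈ l₁ ∨ x ∈ l₂} :=
  ⟨connected_induce_of_relPaths h₁ h₂,
    fun w _ => preconnected_induce_diff_of_relPaths h₁ h₂ hl₁ hl₂ hint w⟩

lemma isBiconn_of_square {m n : N.V} {a₁ a₂ b₁ b₂ : List N.V}
    (ha₁ : RelPath N.E m z₁ a₁) (ha₂ : RelPath N.E m z₂ a₂)
    (hb₁ : RelPath N.E n z₁ b₁) (hb₂ : RelPath N.E n z₂ b₂)
    (ha : ∀ x ∈ a₁, x ∈ a₂ → x = m) (hb : ∀ x ∈ b₁, x ∈ b₂ → x = n)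
    (h₁ : ∀ x ∈ a₁, x ∈ b₁ → x = z₁) (h₂ : ∀ x ∈ a₂, x ∈ b₂ → x = z₂)
    (h₁₂ : ∀ x ∈ a₁, x ∉ b₂) (h₂₁ : ∀ x ∈ a₂, x ∉ b₁) :
    N.IsBiconn {x | x ∈ a₁ ++ b₁.reverse.tail ∨ x ∈ a₂ ++ b₂.reverse.tail} := by
  obtain ⟨hp₁, hn₁, hmem₁⟩ := (ha₁.mono UG_adj_of_E).append_reverse (fun _ _ h => h.symm)
    (hb₁.mono UG_adj_of_E) (nodup_of_relPath ha₁) (nodup_of_relPath hb₁) h₁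
  obtain ⟨hp₂, hn₂, hmem₂⟩ := (ha₂.mono UG_adj_of_E).append_reverse (fun _ _ h => h.symm)
    (hb₂.mono UG_adj_of_E) (nodup_of_relPath ha₂) (nodup_of_relPath hb₂) h₂
  refine isBiconn_of_relPaths hp₁ hp₂ hn₁ hn₂ fun x hx₁ hx₂ => ?_
  rcases hmem₁ x hx₁ with hx₁ | hx₁ <;> rcases hmem₂ x hx₂ with hx₂ | hx₂
  · exact Or.inl (ha x hx₁ hx₂)
  · exact absurd hx₂ (h₁₂ x hx₁)
  · exact absurd hx₁ (h₂₁ x hx₂)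
  · exact Or.inr (hb x hx₁ hx₂)

/-- The four paths contain a cycle through the hybrids `z₁ ≠ z₂`, each lying below a third
vertex of the cycle. -/
lemma Level1.false_of_four_paths (hN : N.Level1) {a₁ a₂ b₁ b₂ : List N.V}
    (ha₁ : RelPath N.E u z₁ a₁) (ha₂ : RelPath N.E u z₂ a₂)
    (hb₁ : RelPath N.E v z₁ b₁) (hb₂ : RelPath N.E v z₂ b₂)
    (h₁ : ∀ x ∈ a₁, x ∈ b₁ → x = z₁) (h₂ : ∀ x ∈ a₂, x ∈ b₂ → x = z₂)
    (h₁₂ : ∀ x ∈ a₁, x ∉ b₂) (h₂₁ : ∀ x ∈ a₂, x ∉ b₁) : False := by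
  obtain ⟨m, a₁', ha₁a₁', a₂', ha₂a₂', ha₁', ha₂', ha⟩ := ha₁.exists_disjoint_suffixes ha₂
  obtain ⟨n, b₁', hb₁b₁', b₂', hb₂b₂', hb₁', hb₂', hb⟩ := hb₁.exists_disjoint_suffixes hb₂
  have hbic := isBiconn_of_square ha₁' ha₂' hb₁' hb₂' ha hb
    (fun x hx hx' => h₁ x (ha₁a₁' hx) (hb₁b₁' hx'))
    (fun x hx hx' => h₂ x (ha₂a₂' hx) (hb₂b₂' hx'))
    (fun x hx hx' => h₁₂ x (ha₁a₁' hx) (hb₂b₂' hx'))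
    (fun x hx hx' => h₂₁ x (ha₂a₂' hx) (hb₁b₁' hx'))
  have hm₁ : m ≠ z₁ := fun h => h₂₁ m (ha₂a₂' ha₂'.head_mem) (h ▸ hb₁.last_mem)
  have hm₂ : m ≠ z₂ := fun h => h₁₂ m (ha₁a₁' ha₁'.head_mem) (h ▸ hb₂.last_mem)
  have hn₁ : n ≠ z₁ := fun h => h₁₂ z₁ ha₁.last_mem (h ▸ hb₂b₂' hb₂'.head_mem)
  have hn₂ : n ≠ z₂ := fun h => h₂₁ z₂ ha₂.last_mem (h ▸ hb₁b₁' hb₁'.head_mem)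
  have hz : z₁ ≠ z₂ := fun h => h₁₂ z₁ ha₁.last_mem (h ▸ hb₂.last_mem)
  have hm : m ∈ {x | x ∈ a₁' ++ b₁'.reverse.tail ∨ x ∈ a₂' ++ b₂'.reverse.tail} :=
    Or.inl (List.mem_append_left _ ha₁'.head_mem)
  refine hz (hN.eq_of_isBiconn hbic ⟨Or.inl (List.mem_append_left _ ha₁'.last_mem),
      isHybrid_of_relPaths ha₁' hb₁' (fun x hx hx' => h₁ x (ha₁a₁' hx) (hb₁b₁' hx')) hm₁ hn₁,
      m, hm, hm₁, ha₁'.reflTransGen⟩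
    ⟨Or.inr (List.mem_append_left _ ha₂'.last_mem),
      isHybrid_of_relPaths ha₂' hb₂' (fun x hx hx' => h₂ x (ha₂a₂' hx) (hb₂b₂' hx')) hm₂ hn₂,
      m, hm, hm₂, ha₂'.reflTransGen⟩)

def IsMaxCommonDesc (N : Network X) (u v z : N.V) : Prop :=
  N.reach u z ∧ N.reach v z ∧ ∀ z', N.reach u z' → N.reach v z' → N.reach z' z → z' = z

lemma exists_isMaxCommonDesc (hu : N.reach u x) (hv : N.reach v x) :
    ∃ z, N.IsMaxCommonDesc u v z ∧ N.reach z x := by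
  obtain ⟨z, ⟨huz, hvz⟩, hzx, hmax⟩ :=
    exists_maximal_reach {z | N.reach u z ∧ N.reach v z} ⟨hu, hv⟩
  exact ⟨z, ⟨huz, hvz, fun z' hu' hv' => hmax z' ⟨hu', hv'⟩⟩, hzx⟩

namespace IsMaxCommonDesc

lemma eq_of_mem {z' : N.V} {a b : List N.V} (h : N.IsMaxCommonDesc u v z)
    (ha : RelPath N.E u z' a) (hb : RelPath N.E v z b) (hxa : x ∈ a) (hxb : x ∈ b) : x = z :=
  h.2.2 x (ha.reflTransGen_head_of_mem hxa) (hb.reflTransGen_head_of_mem hxb)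
    (hb.reflTransGen_last_of_mem hxb)

lemma eq_of_mem_append {p q : List N.V} (h : N.IsMaxCommonDesc u v z) (huv : ¬ N.reach u v)
    (hp : RelPath N.E r v p) (hq : RelPath N.E v z q) (hx : x ∈ p ++ q.tail)
    (hux : N.reach u x) : x = z := by
  rcases List.mem_append.mp hx with hx | hx
  · exact absurd (hux.trans (hp.reflTransGen_last_of_mem hx)) huv
  · have hx := List.mem_of_mem_tail hx
    exact h.2.2 x hux (hq.reflTransGen_head_of_mem hx) (hq.reflTransGen_last_of_mem hx)

lemma isHybrid (h : N.IsMaxCommonDesc u v z) (huv : ¬ N.reach u v) (hvu : ¬ N.reach v u) :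
    N.IsHybrid z := by
  obtain ⟨a, ha⟩ := RelPath.exists_of_reflTransGen h.1
  obtain ⟨b, hb⟩ := RelPath.exists_of_reflTransGen h.2.1
  refine isHybrid_of_relPaths ha hb (fun x hxa hxb => h.eq_of_mem ha hb hxa hxb) ?_ ?_
  · rintro rfl
    exact hvu h.2.1
  · rintro rfl
    exact huv h.1

end IsMaxCommonDesc

lemma Level1.isMaxCommonDesc_unique (hN : N.Level1) (h₁ : N.IsMaxCommonDesc u v z₁)
    (h₂ : N.IsMaxCommonDesc u v z₂) : z₁ = z₂ := by
  by_contra hz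
  obtain ⟨a₁, ha₁⟩ := RelPath.exists_of_reflTransGen h₁.1
  obtain ⟨a₂, ha₂⟩ := RelPath.exists_of_reflTransGen h₂.1
  obtain ⟨b₁, hb₁⟩ := RelPath.exists_of_reflTransGen h₁.2.1
  obtain ⟨b₂, hb₂⟩ := RelPath.exists_of_reflTransGen h₂.2.1
  refine hN.false_of_four_paths ha₁ ha₂ hb₁ hb₂ (fun x => h₁.eq_of_mem ha₁ hb₁)
    (fun x => h₂.eq_of_mem ha₂ hb₂) (fun x hx hx' => ?_) (fun x hx hx' => ?_)
  · obtain rfl := h₂.eq_of_mem ha₁ hb₂ hx hx'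
    exact hz (h₁.2.2 x h₂.1 h₂.2.1 (ha₁.reflTransGen_last_of_mem hx)).symm
  · obtain rfl := h₁.eq_of_mem ha₂ hb₁ hx hx'
    exact hz (h₂.2.2 x h₁.1 h₁.2.1 (ha₂.reflTransGen_last_of_mem hx))

lemma Level1.cluster_inter_eq (hN : N.Level1) (h : N.IsMaxCommonDesc u v z) :
    N.cluster u ∩ N.cluster v = N.cluster z := by
  refine subset_antisymm (fun x ⟨hux, hvx⟩ => ?_) fun x hzx => ⟨h.1.trans hzx, h.2.1.trans hzx⟩
  obtain ⟨z', h', hz'x⟩ := exists_isMaxCommonDesc hux hvx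
  exact hN.isMaxCommonDesc_unique h' h ▸ hz'x

lemma Level1.eq_of_reach_of_isMaxCommonDesc (hN : N.Level1) (huw : ¬ N.reach u w)
    (hwu : ¬ N.reach w u) (h : N.IsMaxCommonDesc u w z₂) (hz₁ : N.IsHybrid z₁)
    (huz₁ : N.reach u z₁) (hz₁z₂ : N.reach z₁ z₂) : z₁ = z₂ := by
  by_contra hne
  obtain ⟨r, hr⟩ := N.exists_reach_all
  obtain ⟨p₁, hp₁⟩ := RelPath.exists_of_reflTransGen (hr z₁)
  obtain ⟨q₁, hq₁⟩ := RelPath.exists_of_reflTransGen hz₁z₂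
  obtain ⟨p₂, hp₂⟩ := RelPath.exists_of_reflTransGen (hr w)
  obtain ⟨q₂, hq₂⟩ := RelPath.exists_of_reflTransGen h.2.1
  have hrz₂ : r ≠ z₂ := by
    rintro rfl
    exact huw (reach_antisymm h.1 (hr u) ▸ hr w)
  obtain ⟨c, ⟨hcq, hcz₂⟩, l₁, -, hc₁, hlast, hbefore⟩ :=
    (hp₁.append hq₁).exists_last_mem (S := {x | x ∈ p₂ ++ q₂.tail ∧ x ≠ z₂})
      ⟨r, (hp₁.append hq₁).head_mem, (hp₂.append hq₂).head_mem, hrz₂⟩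
  have hz₁c : ¬ N.reach z₁ c :=
    fun hz₁c => hcz₂ (h.eq_of_mem_append huw hp₂ hq₂ hcq (huz₁.trans hz₁c))
  have hz₁l₁ : z₁ ∈ l₁ :=
    (hbefore z₁ (List.mem_append_left _ hp₁.last_mem)).resolve_right hz₁c
  obtain ⟨l₂, hl₂, hc₂⟩ := (hp₂.append hq₂).exists_suffix hcq
  have hbic := isBiconn_of_relPaths (hc₁.mono UG_adj_of_E) (hc₂.mono UG_adj_of_E)
    (nodup_of_relPath hc₁)
    (nodup_of_relPath hc₂) fun x hx hx' =>
      (eq_or_ne x z₂).elim Or.inr fun hxz₂ => Or.inl (hlast x hx ⟨hl₂ hx', hxz₂⟩)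
  have hc : c ∈ {x | x ∈ l₁ ∨ x ∈ l₂} := Or.inl hc₁.head_mem
  exact hne (hN.eq_of_isBiconn hbic
    ⟨Or.inl hz₁l₁, hz₁, c, hc, fun hcz₁ => hz₁c (hcz₁ ▸ .refl),
      hc₁.reflTransGen_head_of_mem hz₁l₁⟩
    ⟨Or.inl hc₁.last_mem, h.isHybrid huw hwu, c, hc, hcz₂, hc₁.reflTransGen⟩)

lemma Level1.cluster_subset_of_isMaxCommonDesc (hN : N.Level1) (huv : ¬ N.reach u v)
    (hvu : ¬ N.reach v u) (huw : ¬ N.reach u w) (hwu : ¬ N.reach w u)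
    (h₁ : N.IsMaxCommonDesc u v z₁) (h₂ : N.IsMaxCommonDesc u w z₂) :
    N.cluster z₁ ⊆ N.cluster z₂ := by
  by_cases h₂₁ : N.reach z₂ z₁
  · exact cluster_subset_of_reach h₂₁
  by_cases h₁₂ : N.reach z₁ z₂
  · rw [hN.eq_of_reach_of_isMaxCommonDesc huw hwu h₂ (h₁.isHybrid huv hvu) h₁.1 h₁₂]
  exfalso
  obtain ⟨r, hr⟩ := N.exists_reach_all
  obtain ⟨a₁, ha₁⟩ := RelPath.exists_of_reflTransGen h₁.1
  obtain ⟨a₂, ha₂⟩ := RelPath.exists_of_reflTransGen h₂.1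
  obtain ⟨p₁, hp₁⟩ := RelPath.exists_of_reflTransGen (hr v)
  obtain ⟨q₁, hq₁⟩ := RelPath.exists_of_reflTransGen h₁.2.1
  obtain ⟨p₂, hp₂⟩ := RelPath.exists_of_reflTransGen (hr w)
  obtain ⟨q₂, hq₂⟩ := RelPath.exists_of_reflTransGen h₂.2.1
  refine hN.false_of_four_paths ha₁ ha₂ (hp₁.append hq₁) (hp₂.append hq₂)
    (fun x hx hx' => h₁.eq_of_mem_append huv hp₁ hq₁ hx' (ha₁.reflTransGen_head_of_mem hx))
    (fun x hx hx' => h₂.eq_of_mem_append huw hp₂ hq₂ hx' (ha₂.reflTransGen_head_of_mem hx))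
    (fun x hx hx' => ?_) (fun x hx hx' => ?_)
  · obtain rfl := h₂.eq_of_mem_append huw hp₂ hq₂ hx' (ha₁.reflTransGen_head_of_mem hx)
    exact h₂₁ (ha₁.reflTransGen_last_of_mem hx)
  · obtain rfl := h₁.eq_of_mem_append huv hp₁ hq₁ hx' (ha₂.reflTransGen_head_of_mem hx)
    exact h₁₂ (ha₂.reflTransGen_last_of_mem hx)

theorem Level1.propertyL (hN : N.Level1) : PropertyL N.CS := by
  rintro _ ⟨u, rfl⟩ _ ⟨v, rfl⟩ _ ⟨w, rfl⟩ huv huw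
  obtain ⟨huv', hvu'⟩ := not_reach_of_overlap huv
  obtain ⟨huw', hwu'⟩ := not_reach_of_overlap huw
  obtain ⟨x, hux, hvx⟩ := huv.1
  obtain ⟨y, huy, hwy⟩ := huw.1
  obtain ⟨z₁, h₁, -⟩ := exists_isMaxCommonDesc hux hvx
  obtain ⟨z₂, h₂, -⟩ := exists_isMaxCommonDesc huy hwy
  rw [hN.cluster_inter_eq h₁, hN.cluster_inter_eq h₂]
  exact (hN.cluster_subset_of_isMaxCommonDesc huv' hvu' huw' hwu' h₁ h₂).antisymm
    (hN.cluster_subset_of_isMaxCommonDesc huw' hwu' huv' hvu' h₂ h₁)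

end Network

lemma reflTransGen_covBy_iff {α : Type*} [PartialOrder α] [Finite α] {a b : α} :
    Relation.ReflTransGen (· ⋖ ·) a b ↔ a ≤ b := by
  classical
  have := Fintype.ofFinite α
  let := Fintype.toLocallyFiniteOrder (α := α)
  exact le_iff_reflTransGen_covBy.symm

section Hasse

variable [Finite X] (𝓘 : Set (Set X))

noncomputable def hasseNetwork (hne : ∀ A ∈ 𝓘, A.Nonempty) (huniv : univ ∈ 𝓘)
    (hsing : ∀ x : X, {x} ∈ 𝓘) : Network X where
  V := 𝓘
  fintypeV := Fintype.ofFinite _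
  E u v := v ⋖ u
  leafEmb x := ⟨{x}, hsing x⟩
  leafEmb_inj x y h := by simpa using congrArg Subtype.val h
  acyclic u v huv hvu :=
    huv.lt.not_ge (reflTransGen_covBy_iff.mp (Relation.reflTransGen_swap.mp hvu))
  root_unique := by
    refine ⟨⟨univ, huniv⟩, fun u hu => hu.lt.not_ge (subset_univ _), fun y hy => ?_⟩
    by_contra hyr
    have hy' : y < ⟨univ, huniv⟩ := lt_of_le_of_ne (subset_univ _) hyr
    obtain ⟨x, hyx, -⟩ := exists_covBy_le_of_lt hy'
    exact hy x hyx
  leaf_iff v := by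
    constructor
    · intro hv
      obtain ⟨x, hx⟩ := hne v v.2
      refine ⟨x, eq_of_le_of_not_lt (singleton_subset_iff.mpr hx) fun hxv => ?_⟩
      obtain ⟨w, -, hwv⟩ := exists_le_covBy_of_lt hxv
      exact hv w hwv
    · rintro ⟨x, rfl⟩ w hw
      have : (w : Set X) ⊂ {x} := hw.lt
      exact (hne w w.2).ne_empty (ssubset_singleton_iff.mp this)

variable {𝓘} {hne : ∀ A ∈ 𝓘, A.Nonempty} {huniv : univ ∈ 𝓘} {hsing : ∀ x : X, {x} ∈ 𝓘}

local notation "𝓝" => hasseNetwork 𝓘 hne huniv hsing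

lemma hasseNetwork_reach_iff {u v : 𝓘} : (𝓝).reach u v ↔ v ≤ u :=
  (Relation.reflTransGen_swap (r := fun a b : 𝓘 => a ⋖ b)).trans reflTransGen_covBy_iff

lemma hasseNetwork_cluster (v : 𝓘) : (𝓝).cluster v = v := by
  ext x
  exact hasseNetwork_reach_iff.trans singleton_subset_iff

lemma hasseNetwork_CS : (𝓝).CS = 𝓘 := by
  ext A
  refine ⟨?_, fun hA => ⟨⟨A, hA⟩, hasseNetwork_cluster _⟩⟩
  rintro ⟨v, rfl⟩
  exact (hasseNetwork_cluster v).symm ▸ v.2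

lemma inter_eq_of_isHybrid (hcl : IsClosedCS 𝓘) {v : 𝓘} (hv : (𝓝).IsHybrid v) :
    ∃ P Q : 𝓘, Overlap (P : Set X) Q ∧ (P : Set X) ∩ Q = v := by
  obtain ⟨P, Q, hP, hQ, hPQ⟩ : ∃ P Q : 𝓘, v ⋖ P ∧ v ⋖ Q ∧ P ≠ Q := Network.isHybrid_iff.mp hv
  have hvPQ : (v : Set X) ⊆ P ∩ Q := subset_inter hP.le hQ.le
  have hne' : ((P : Set X) ∩ Q).Nonempty := (hne v v.2).mono hvPQ
  let W : 𝓘 := ⟨P ∩ Q, hcl _ P.2 _ Q.2 hne'⟩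
  have hW : W = v := by
    rcases hP.eq_or_eq (show v ≤ W from hvPQ) (show W ≤ P from inter_subset_left) with h | h
    · exact h
    rcases hQ.eq_or_eq (show v ≤ W from hvPQ) (show W ≤ Q from inter_subset_right) with h' | h'
    · exact h'
    · exact absurd (h.symm.trans h') hPQ
  refine ⟨P, Q, ⟨hne', fun h => hP.lt.ne ?_, fun h => hQ.lt.ne ?_⟩, congrArg Subtype.val hW⟩
  · exact hW.symm.trans (Subtype.ext h)
  · exact hW.symm.trans (Subtype.ext h)

lemma le_or_le_or_disjoint_of_isHybrid (hcl : IsClosedCS 𝓘) (hL : PropertyL 𝓘) {v : 𝓘}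
    (hv : (𝓝).IsHybrid v) (D : 𝓘) : v ≤ D ∨ D ≤ v ∨ Disjoint (D : Set X) v := by
  obtain ⟨P, Q, hPQ, hv'⟩ := inter_eq_of_isHybrid hcl hv
  have h := not_overlap_iff.mp (hL.inter_not_overlap P.2 Q.2 hPQ D.2)
  rw [hv'] at h
  rcases h with h | h | h
  exacts [Or.inl h, Or.inr (Or.inl h), Or.inr (Or.inr h.symm)]

lemma not_lt_of_isLowerHybrid (hcl : IsClosedCS 𝓘) (hL : PropertyL 𝓘) {B : Set 𝓘}
    (hB : (𝓝).IsBiconn B) {v : 𝓘} (hv : (𝓝).IsLowerHybrid B v) {d : 𝓘} (hd : d ∈ B) :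
    ¬ d < v := by
  obtain ⟨hvB, hhyb, u, huB, huv, hvu⟩ := hv
  intro hdv
  refine (hasseNetwork_reach_iff.mp hvu).not_gt (forall_of_induce_preconnected (hB.2 v hvB)
    (fun t : 𝓘 => t < v) ?_ ⟨hd, hdv.ne⟩ ⟨huB, huv⟩ hdv)
  rintro (t : 𝓘) - (t' : 𝓘) ⟨-, ht'v⟩ ⟨-, hE | hE⟩ htv
  · exact (show t' ⋖ t from hE).lt.trans htv
  · have hE : t ⋖ t' := hE
    rcases le_or_le_or_disjoint_of_isHybrid hcl hL hhyb t' with h | h | h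
    · exact absurd (lt_of_le_of_ne h (Ne.symm ht'v)) (hE.2 htv)
    · exact lt_of_le_of_ne h ht'v
    · exact absurd (h.mono (Subtype.coe_le_coe.mpr hE.le) (Subtype.coe_le_coe.mpr htv.le))
        (not_disjoint_of_subset (hne t t.2) subset_rfl)

lemma le_or_disjoint_of_isLowerHybrid (hcl : IsClosedCS 𝓘) (hL : PropertyL 𝓘) {B : Set 𝓘}
    (hB : (𝓝).IsBiconn B) {v : 𝓘} (hv : (𝓝).IsLowerHybrid B v) {t : 𝓘} (ht : t ∈ B) :
    v ≤ t ∨ Disjoint (t : Set X) v := by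
  rcases le_or_le_or_disjoint_of_isHybrid hcl hL hv.2.1 t with h | h | h
  · exact Or.inl h
  · exact Or.inl (eq_of_le_of_not_lt h (not_lt_of_isLowerHybrid hcl hL hB hv ht)).ge
  · exact Or.inr h

def IsExit (B : Set 𝓘) (v W : 𝓘) : Prop :=
  W ∈ B ∧ v ≤ W ∧ ∃ y ∈ B, y ⋖ W ∧ Disjoint (y : Set X) v

lemma exists_isExit (hcl : IsClosedCS 𝓘) (hL : PropertyL 𝓘) {B : Set 𝓘} (hB : (𝓝).IsBiconn B)
    {v : 𝓘} (hv : (𝓝).IsLowerHybrid B v) {t : 𝓘} (ht : t ∈ B) (htv : Disjoint (t : Set X) v) :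
    ∃ W, IsExit B v W := by
  by_contra! hno
  have hvt : v ≤ t := by
    refine forall_of_induce_preconnected hB.1.preconnected (fun t : 𝓘 => v ≤ t) ?_ hv.1 ht le_rfl
    rintro (t : 𝓘) htB (t' : 𝓘) ht'B ⟨-, hE | hE⟩ hvt
    · exact (le_or_disjoint_of_isLowerHybrid hcl hL hB hv ht'B).resolve_right
        fun h => hno t ⟨htB, hvt, t', ht'B, hE, h⟩
    · exact hvt.trans (show t ⋖ t' from hE).le
  exact not_disjoint_of_subset (hne v v.2) hvt htv.symm

lemma false_of_isExit_of_inter_subset (hcl : IsClosedCS 𝓘) (hL : PropertyL 𝓘) {B : Set 𝓘}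
    (hB : (𝓝).IsBiconn B) {v W : 𝓘} (hv : (𝓝).IsLowerHybrid B v) (hW : IsExit B v W)
    (hmin : ∀ W', IsExit B v W' → ¬ W' < W)
    (hWv : ∀ Z ∈ 𝓘, Overlap (W : Set X) Z → (W : Set X) ∩ Z ⊆ v) : False := by
  obtain ⟨hWB, hvW, y, hyB, hyW, hyv⟩ := hW
  have hvW' : v ≠ W := by
    rintro rfl
    exact not_disjoint_of_subset (hne y y.2) hyW.le hyv
  have hv' := forall_of_induce_preconnected (hB.preconnected_diff W)
    (fun t : 𝓘 => t ≤ W ∧ Disjoint (t : Set X) v) ?_ ⟨hyB, hyW.ne⟩ ⟨hv.1, hvW'⟩ ⟨hyW.le, hyv⟩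
  · exact not_disjoint_of_subset (hne v v.2) subset_rfl hv'.2
  rintro (t : 𝓘) ⟨htB, htW⟩ (t' : 𝓘) ⟨ht'B, ht'W⟩ ⟨-, hE | hE⟩ ⟨htW', htv⟩
  · have hE : t' ⋖ t := hE
    exact ⟨hE.le.trans htW', htv.mono_left hE.le⟩
  have hE : t ⋖ t' := hE
  rcases subset_or_subset_or_overlap ((hne t t.2).mono (subset_inter hE.le htW')) with h | h | h
  · refine ⟨h, (le_or_disjoint_of_isLowerHybrid hcl hL hB hv ht'B).resolve_left fun hvt' => ?_⟩
    exact hmin t' ⟨ht'B, hvt', t, htB, hE, htv⟩ (lt_of_le_of_ne h ht'W)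
  · have hWt' : W < t' := lt_of_le_of_ne h (Ne.symm ht'W)
    exact absurd hWt' (hE.2 (lt_of_le_of_ne htW' htW))
  · exact absurd htv (not_disjoint_of_subset (hne t t.2)
      ((subset_inter htW' hE.le).trans (hWv t' t'.2 h.symm)))

lemma false_of_isExit_of_separator (hcl : IsClosedCS 𝓘) (hL : PropertyL 𝓘) {B : Set 𝓘}
    (hB : (𝓝).IsBiconn B) {v W S : 𝓘} (hv : (𝓝).IsLowerHybrid B v) (hW : IsExit B v W)
    (hmin : ∀ W', IsExit B v W' → ¬ W' < W) (hvS : v < S) (hSW : S ≤ W)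
    (hS : ∀ Z : 𝓘, v ≤ Z → Z ≤ S ∨ S ≤ Z) : False := by
  obtain ⟨-, -, y, hyB, -, hyv⟩ := hW
  have hyS : y ≠ S := by
    rintro rfl
    exact not_disjoint_of_subset (hne v v.2) hvS.le hyv.symm
  have hy := forall_of_induce_preconnected (hB.preconnected_diff S)
    (fun t : 𝓘 => v ≤ t ∧ t < S) ?_ ⟨hv.1, hvS.ne⟩ ⟨hyB, hyS⟩ ⟨le_rfl, hvS⟩
  · exact not_disjoint_of_subset (hne v v.2) hy.1 hyv.symm
  rintro (t : 𝓘) ⟨htB, -⟩ (t' : 𝓘) ⟨ht'B, ht'S⟩ ⟨-, hE | hE⟩ ⟨hvt, htS⟩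
  · have hE : t' ⋖ t := hE
    refine ⟨(le_or_disjoint_of_isLowerHybrid hcl hL hB hv ht'B).resolve_right fun ht'v => ?_,
      hE.lt.trans htS⟩
    exact hmin t ⟨htB, hvt, t', ht'B, hE, ht'v⟩ (htS.trans_le hSW)
  · have hE : t ⋖ t' := hE
    rcases hS t' (hvt.trans hE.le) with h | h
    · exact ⟨hvt.trans hE.le, lt_of_le_of_ne h ht'S⟩
    · exact absurd (lt_of_le_of_ne h (Ne.symm ht'S)) (hE.2 htS)

lemma le_of_isLowerHybrid (hcl : IsClosedCS 𝓘) (hL : PropertyL 𝓘) {B : Set 𝓘}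
    (hB : (𝓝).IsBiconn B) {v : 𝓘} (hv : (𝓝).IsLowerHybrid B v) {t : 𝓘} (ht : t ∈ B) :
    v ≤ t := by
  refine (le_or_disjoint_of_isLowerHybrid hcl hL hB hv ht).resolve_right fun htv => ?_
  obtain ⟨W, hW⟩ := Set.Finite.exists_minimal (toFinite {W | IsExit B v W})
    (exists_isExit hcl hL hB hv ht htv)
  have hmin : ∀ W', IsExit B v W' → ¬ W' < W := fun W' hW' hlt => hW.not_prop_of_lt hlt hW'
  obtain ⟨-, hvW, y, -, hyW, hyv⟩ := hW.prop
  by_cases hsep : ∀ Z : 𝓘, v ≤ Z → Z ≤ W ∨ W ≤ Z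
  · refine false_of_isExit_of_separator hcl hL hB hv hW.prop hmin (lt_of_le_of_ne hvW ?_)
      le_rfl hsep
    rintro rfl
    exact not_disjoint_of_subset (hne y y.2) hyW.le hyv
  push Not at hsep
  obtain ⟨Z, hvZ, hZW, hWZ⟩ := hsep
  have hWZ' : Overlap (W : Set X) Z :=
    overlap_iff.mpr ⟨(hne v v.2).mono (subset_inter hvW hvZ), hWZ, hZW⟩
  let Q : 𝓘 := ⟨W ∩ Z, hcl _ W.2 _ Z.2 hWZ'.1⟩
  by_cases hQv : Q ≤ v
  · refine false_of_isExit_of_inter_subset hcl hL hB hv hW.prop hmin fun Z' hZ' hWZ'' => ?_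
    rw [hL _ W.2 _ hZ' _ Z.2 hWZ'' hWZ']
    exact hQv
  refine false_of_isExit_of_separator hcl hL hB hv hW.prop hmin
    (lt_of_le_not_ge (show v ≤ Q from subset_inter hvW hvZ) hQv) inter_subset_left fun Z' hvZ' => ?_
  rcases not_overlap_iff.mp (hL.inter_not_overlap W.2 Z.2 hWZ' Z'.2) with h | h | h
  · exact Or.inr h
  · exact Or.inl h
  · exact absurd (h.mono (subset_inter hvW hvZ) hvZ')
      (not_disjoint_of_subset (hne v v.2) subset_rfl)

lemma hasseNetwork_level1 (hcl : IsClosedCS 𝓘) (hL : PropertyL 𝓘) : (𝓝).Level1 :=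
  fun _ hB _ hv _ hw => le_antisymm (α := 𝓘) (le_of_isLowerHybrid hcl hL hB.1 hv hw.1)
    (le_of_isLowerHybrid hcl hL hB.1 hw hv.1)

end Hasse

theorem exists_level1_network_of_propertyL [Finite X] {𝒞 : Set (Set X)}
    (h𝒞 : IsClusteringSystem 𝒞) (hL : PropertyL 𝒞) :
    ∃ N : Network X, N.Level1 ∧ N.CS = interClosure 𝒞 := by
  obtain ⟨hempty, huniv, hsing⟩ := h𝒞
  have hsub := subset_interClosure hempty
  exact ⟨hasseNetwork (interClosure 𝒞) (fun _ hA => hA.1) (hsub huniv) (fun x => hsub (hsing x)),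
    hasseNetwork_level1 (isClosedCS_interClosure 𝒞) (propertyL_interClosure hL), hasseNetwork_CS⟩

/-- For a clustering system `𝒞` the following are equivalent:
(1) `𝒞` is compatible with a level-1 network (∃ level-1 `N` with `𝒞 ⊆ 𝒞_N`);
(2) there is a level-1 network `N` with `𝒞_N = 𝓘(𝒞)`;
(3) `𝒞` satisfies property (L). -/
theorem level1_compatibility_tfae (X : Type) [Fintype X] (𝒞 : Set (Set X))
    (h𝒞 : IsClusteringSystem 𝒞) :
    ((∃ N : Network X, N.Level1 ∧ 𝒞 ⊆ N.CS) ↔ PropertyL 𝒞) ∧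
    ((∃ N : Network X, N.Level1 ∧ N.CS = interClosure 𝒞) ↔ PropertyL 𝒞) := by
  have hsub := subset_interClosure h𝒞.1
  refine ⟨⟨fun ⟨N, hN, h⟩ => hN.propertyL.mono h, fun hL => ?_⟩,
    ⟨fun ⟨N, hN, h⟩ => hN.propertyL.mono (h ▸ hsub), exists_level1_network_of_propertyL h𝒞⟩⟩
  obtain ⟨N, hN, h⟩ := exists_level1_network_of_propertyL h𝒞 hL
  exact ⟨N, hN, h ▸ hsub⟩

end PhyloNet
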